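/- arXiv:2208.13663 — 5 statements merged into one kernel-verified Lean document; each statement's English description precedes it below -/
import Mathlib

section
/- Consider the finite episodic MDP M₀ with state set S = {s1, s2}, action set A = {a1, a2}, horizon H = 2, deterministic transitions P(s1,a1) = s1, P(s1,a2) = s2, P(s2,a1) = s2, P(s2,a2) = s1, mean rewards μ(s1,a1) = 1/4, μ(s1,a2) = 1, μ(s2,a1) = 3/5, μ(s2,a2) = 1, and target policy π⁺ with π⁺_h(s) = a1 for every h ∈ {1,2} and s ∈ S. Then for every step-dependent modified mean-reward function r : {1,2} × S × A → ℝ satisfying r_h(s,a) ∈ [0,1] for all (h,s,a) and r_h(s, π⁺_h(s)) = μ(s, π⁺_h(s)) for all (h,s), the reward-manipulated MDP (with rewards r and unchanged transitions P) is NOT successfully attacked: there exist a deterministic policy π̃, a step h ∈ {1,2}, and a state s ∈ S with π̃_h(s) ≠ π⁺_h(s) and Ṽ^{π̃}_h(s) ≥ Ṽ^{π⁺}_h(s), where Ṽ denotes value functions computed with rewards r. In particular, in the bounded-reward setting with manipulation allowed only off the target policy, there exists an MDP and a target policy for which no reward-manipulation attack can make π⁺ strictly dominate at every disagreeing state. 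-/
open scoped BigOperators

namespace RLAttack

variable {S A : Type*} [Fintype S] [Fintype A]

/-- Expectation of `f` under a `PMF` on a finite type. -/
noncomputable def expVal (p : PMF S) (f : S → ℝ) : ℝ :=
  ∑ s' : S, (p s').toReal * f s'

/-- Auxiliary backward-induction value: `n` steps remaining, current step `h`. -/
noncomputable def valAux (r : ℕ → S → A → ℝ) (P : ℕ → S → A → PMF S)
    (π : ℕ → S → A) : ℕ → ℕ → S → ℝ
  | 0, _, _ => 0
  | n + 1, h, s => r h s (π h s) + expVal (P h s (π h s)) (valAux r P π n (h + 1))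

/-- Value function `V^π_h(s)` for horizon `H`: `V^π_{H+1} = 0` and
`V^π_h(s) = r_h(s, π_h(s)) + E_{s' ~ P_h(s, π_h(s))}[V^π_{h+1}(s')]`. -/
noncomputable def V (H : ℕ) (r : ℕ → S → A → ℝ) (P : ℕ → S → A → PMF S)
    (π : ℕ → S → A) (h : ℕ) (s : S) : ℝ :=
  valAux r P π (H + 1 - h) h s

/-- Q-value function `Q^π_h(s,a) = r_h(s,a) + E_{s' ~ P_h(s,a)}[V^π_{h+1}(s')]`. -/
noncomputable def Q (H : ℕ) (r : ℕ → S → A → ℝ) (P : ℕ → S → A → PMF S)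
    (π : ℕ → S → A) (h : ℕ) (s : S) (a : A) : ℝ :=
  r h s a + expVal (P h s a) (fun s' => V H r P π (h + 1) s')


/-- States of `M₀`: `st 0 = s1`, `st 1 = s2`. -/
def s1 : Fin 2 := 0
def s2 : Fin 2 := 1
/-- Actions of `M₀`: `a1`, `a2`. -/
def a1 : Fin 2 := 0
def a2 : Fin 2 := 1

/-- Deterministic transitions of `M₀`:
`P(s1,a1)=s1, P(s1,a2)=s2, P(s2,a1)=s2, P(s2,a2)=s1`. -/
noncomputable def P0 (s a : Fin 2) : PMF (Fin 2) :=
  PMF.pure (if a = a1 then s else 1 - s)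

/-- Mean rewards of `M₀`: `μ(s1,a1)=1/4, μ(s1,a2)=1, μ(s2,a1)=3/5, μ(s2,a2)=1`. -/
noncomputable def mu0 (s a : Fin 2) : ℝ :=
  if a = a2 then 1 else if s = s1 then 1/4 else 3/5

/-- Target policy `π⁺_h(s) = a1` for all `h`, `s`. -/
def piPlus : ℕ → Fin 2 → Fin 2 := fun _ _ => a1

/-- In the bounded-reward setting, for the MDP `M₀` and target policy `π⁺`,
no reward-manipulation attack that keeps rewards in `[0,1]` and leaves rewards unchanged on
the target action can be successful: some policy disagreeing with `π⁺` at some `(h,s)` has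
manipulated value at least that of `π⁺`. -/
theorem statement0 :
    ∀ r : ℕ → Fin 2 → Fin 2 → ℝ,
      (∀ h ∈ Finset.Icc 1 2, ∀ s a : Fin 2, r h s a ∈ Set.Icc (0 : ℝ) 1) →
      (∀ h ∈ Finset.Icc 1 2, ∀ s : Fin 2, r h s (piPlus h s) = mu0 s (piPlus h s)) →
      ∃ (πt : ℕ → Fin 2 → Fin 2) (h : ℕ) (s : Fin 2),
        h ∈ Finset.Icc 1 2 ∧ πt h s ≠ piPlus h s ∧
        V 2 r (fun _ => P0) πt h s ≥ V 2 r (fun _ => P0) piPlus h s := by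

  intro r h01 hfix
  refine ⟨fun h s => if h = 1 ∧ s = s1 then a2 else a1, 1, s1, by decide, by decide, ?_⟩
  have h1 : (1:ℕ) ∈ Finset.Icc 1 2 := by decide
  have h2 : (2:ℕ) ∈ Finset.Icc 1 2 := by decide
  have e1 := hfix 1 h1 s1
  have e2 := hfix 2 h2 s1
  have e3 := hfix 2 h2 s2
  have hnn : (0:ℝ) ≤ r 1 s1 a2 := (h01 1 h1 s1 a2).1
  simp only [piPlus, mu0, s1, s2, a1, a2] at e1 e2 e3 hnn ⊢
  show V 2 r (fun _ => P0) _ 1 0 ≥ V 2 r (fun _ => P0) (fun _ _ => (0 : Fin 2)) 1 0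
  simp only [V, valAux, expVal, Fin.sum_univ_two, P0, PMF.pure_apply, s1, s2, a1, a2]
  norm_num at e1 e2 e3 hnn ⊢
  rw [e1, e2, e3]
  norm_num
  linarith


end RLAttack
end

section
/- Consider the finite episodic MDP M₀ with state set S = {s1, s2}, action set A = {a1, a2}, horizon H = 2, deterministic transitions P(s1,a1) = s1, P(s1,a2) = s2, P(s2,a1) = s2, P(s2,a2) = s1, mean rewards μ(s1,a1) = 1/4, μ(s1,a2) = 1, μ(s2,a1) = 3/5, μ(s2,a2) = 1, and target policy π⁺ with π⁺_h(s) = a1 for all h, s. Let π̃ be the policy with π̃_1(s1) = π̃_1(s2) = a2 and π̃_2(s1) = π̃_2(s2) = a1. Then for every step-dependent modified reward function r : {1,2} × S × A → [0,1] satisfying r_h(s, π⁺_h(s)) = μ(s, π⁺_h(s)) for all (h,s): Ṽ^{π⁺}_1(s1) = 1/2, Ṽ^{π̃}_1(s1) = r_1(s1,a2) + 3/5 ≥ 3/5, and hence Ṽ^{π̃}_1(s1) > Ṽ^{π⁺}_1(s1), where Ṽ denotes value functions computed with rewards r and transitions P. -/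
open scoped BigOperators

namespace RLAttack

variable {S A : Type*} [Fintype S] [Fintype A]

/-- The policy `π̃`: `π̃_1 ≡ a2`, `π̃_2 ≡ a1`. -/
def piTilde : ℕ → Fin 2 → Fin 2 := fun h _ => if h = 1 then a2 else a1

lemma expVal_pure (x : Fin 2) (f : Fin 2 → ℝ) : expVal (PMF.pure x) f = f x := by
  simp [expVal, PMF.pure_apply, Fin.sum_univ_two]
  fin_cases x <;> simp

theorem statement2aux :
    ∀ r : ℕ → Fin 2 → Fin 2 → ℝ,
      (∀ h ∈ Finset.Icc 1 2, ∀ s a : Fin 2, r h s a ∈ Set.Icc (0 : ℝ) 1) →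
      (∀ h ∈ Finset.Icc 1 2, ∀ s : Fin 2, r h s (piPlus h s) = mu0 s (piPlus h s)) →
      V 2 r (fun _ => P0) piPlus 1 s1 = 1 / 2 ∧
      V 2 r (fun _ => P0) piTilde 1 s1 = r 1 s1 a2 + 3 / 5 ∧
      V 2 r (fun _ => P0) piTilde 1 s1 ≥ 3 / 5 ∧
      V 2 r (fun _ => P0) piTilde 1 s1 > V 2 r (fun _ => P0) piPlus 1 s1 := by
  intro r hb hfix
  have h1 : r 1 s1 a1 = 1/4 := by
    have := hfix 1 (by decide) s1; simpa [piPlus, mu0, s1, a1, a2] using this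
  have h2 : r 2 s1 a1 = 1/4 := by
    have := hfix 2 (by decide) s1; simpa [piPlus, mu0, s1, a1, a2] using this
  have h3 : r 2 s2 a1 = 3/5 := by
    have := hfix 2 (by decide) s2; simpa [piPlus, mu0, s1, s2, a1, a2] using this
  have hr0 : (0:ℝ) ≤ r 1 s1 a2 := (hb 1 (by decide) s1 a2).1
  have hVplus : V 2 r (fun _ => P0) piPlus 1 s1 = 1/2 := by
    simp [V, valAux, P0, piPlus, expVal_pure]
    simp only [s1, a1] at h1 h2 ⊢
    linarith
  have hVtilde : V 2 r (fun _ => P0) piTilde 1 s1 = r 1 s1 a2 + 3/5 := by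
    have : (if a2 = a1 then s1 else 1 - s1) = s2 := by decide
    simp [V, valAux, P0, piTilde, expVal_pure, this, h3]
  refine ⟨hVplus, hVtilde, ?_, ?_⟩ <;> rw [hVtilde] <;> try rw [hVplus]
  · linarith
  · linarith


/-- For the MDP `M₀`, the target policy `π⁺ ≡ a1` and the policy `π̃`,
under any bounded reward manipulation that is unchanged along the target policy:
`Ṽ^{π⁺}_1(s1) = 1/2`, `Ṽ^{π̃}_1(s1) = r_1(s1,a2) + 3/5 ≥ 3/5`, and hence
`Ṽ^{π̃}_1(s1) > Ṽ^{π⁺}_1(s1)`. -/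
theorem statement2 :
    ∀ r : ℕ → Fin 2 → Fin 2 → ℝ,
      (∀ h ∈ Finset.Icc 1 2, ∀ s a : Fin 2, r h s a ∈ Set.Icc (0 : ℝ) 1) →
      (∀ h ∈ Finset.Icc 1 2, ∀ s : Fin 2, r h s (piPlus h s) = mu0 s (piPlus h s)) →
      V 2 r (fun _ => P0) piPlus 1 s1 = 1 / 2 ∧
      V 2 r (fun _ => P0) piTilde 1 s1 = r 1 s1 a2 + 3 / 5 ∧
      V 2 r (fun _ => P0) piTilde 1 s1 ≥ 3 / 5 ∧
      V 2 r (fun _ => P0) piTilde 1 s1 > V 2 r (fun _ => P0) piPlus 1 s1 := by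
  exact statement2aux

end RLAttack
end

section
/- Consider the finite episodic MDP M₀ with state set S = {s1, s2}, action set A = {a1, a2}, horizon H = 2, deterministic transitions P(s1,a1) = s1, P(s1,a2) = s2, P(s2,a1) = s2, P(s2,a2) = s1, mean rewards μ(s1,a1) = 1/4, μ(s1,a2) = 1, μ(s2,a1) = 3/5, μ(s2,a2) = 1, and target policy π⁺ with π⁺_h(s) = a1 for all h, s. Let π̃ be the policy with π̃_1(s1) = π̃_1(s2) = a2 and π̃_2(s1) = π̃_2(s2) = a1. Then for every (possibly randomized) step-dependent action-manipulation kernel g : {1,2} × S × A → PMF A with g_h(s, π⁺_h(s)) = pure(π⁺_h(s)) for all (h,s), the action-manipulated MDP (rewards r̄_h(s,a) = E_{a' ~ g_h(s,a)}[μ(s,a')], transitions P̄_h(s,a) = E_{a' ~ g_h(s,a)}[P(s,a')]) satisfies V̄^{π̃}_1(s1) ≥ min{1/2, 8/5} = 1/2 = V̄^{π⁺}_1(s1); since π̃_1(s1) ≠ π⁺_1(s1), the strict-dominance attack objective fails at step 1 and state s1. -/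
open scoped BigOperators

namespace RLAttack

variable {S A : Type*} [Fintype S] [Fintype A]

/-- Action-manipulated step-dependent rewards: `r̄_h(s,a) = E_{a' ~ g_h(s,a)}[μ(s,a')]`. -/
noncomputable def rAct (g : ℕ → Fin 2 → Fin 2 → PMF (Fin 2)) : ℕ → Fin 2 → Fin 2 → ℝ :=
  fun h s a => ∑ a' : Fin 2, ((g h s a) a').toReal * mu0 s a'

/-- Action-manipulated step-dependent transitions: `P̄_h(s,a) = E_{a' ~ g_h(s,a)}[P(s,a')]`. -/
noncomputable def PAct (g : ℕ → Fin 2 → Fin 2 → PMF (Fin 2)) : ℕ → Fin 2 → Fin 2 → PMF (Fin 2) :=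
  fun h s a => (g h s a).bind fun a' => P0 s a'


lemma pmf_toReal_add (g : PMF (Fin 2)) : (g 0).toReal + (g 1).toReal = 1 := by
  have h := g.tsum_coe
  rw [tsum_fintype, Fin.sum_univ_two] at h
  rw [← ENNReal.toReal_add (PMF.apply_ne_top g 0) (PMF.apply_ne_top g 1), h, ENNReal.toReal_one]

lemma bind_apply_two (g : PMF (Fin 2)) (f : Fin 2 → PMF (Fin 2)) (b : Fin 2) :
    (g.bind f) b = g 0 * f 0 b + g 1 * f 1 b := by
  rw [PMF.bind_apply, tsum_fintype, Fin.sum_univ_two]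

/-- For the MDP `M₀`, the target policy `π⁺ ≡ a1` and the policy `π̃`,
under any (possibly randomized) action manipulation leaving the target action unchanged:
`V̄^{π̃}_1(s1) ≥ min {1/2, 8/5} = 1/2 = V̄^{π⁺}_1(s1)`; since `π̃_1(s1) ≠ π⁺_1(s1)`,
the strict-dominance attack objective fails at step 1 and state `s1`. -/
theorem statement3 :
    ∀ g : ℕ → Fin 2 → Fin 2 → PMF (Fin 2),
      (∀ h ∈ Finset.Icc 1 2, ∀ s : Fin 2, g h s (piPlus h s) = PMF.pure (piPlus h s)) →
      V 2 (rAct g) (PAct g) piTilde 1 s1 ≥ min (1 / 2 : ℝ) (8 / 5) ∧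
      min (1 / 2 : ℝ) (8 / 5) = 1 / 2 ∧
      V 2 (rAct g) (PAct g) piPlus 1 s1 = 1 / 2 ∧
      piTilde 1 s1 ≠ piPlus 1 s1 ∧
      ¬ (V 2 (rAct g) (PAct g) piTilde 1 s1 < V 2 (rAct g) (PAct g) piPlus 1 s1) := by
  intro g hg
  have hg1 : g 1 s1 a1 = PMF.pure a1 := hg 1 (by decide) s1
  have hg2 : ∀ s : Fin 2, g 2 s a1 = PMF.pure a1 := hg 2 (by decide)
  set p := ((g 1 s1 a2) 0).toReal with hp
  set q := ((g 1 s1 a2) 1).toReal with hq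
  have hpq : p + q = 1 := pmf_toReal_add _
  have hp0 : 0 ≤ p := ENNReal.toReal_nonneg
  have hq0 : 0 ≤ q := ENNReal.toReal_nonneg
  -- inner values
  have hinner : ∀ s : Fin 2, valAux (rAct g) (PAct g) piTilde 1 2 s = mu0 s a1 := by
    intro s
    simp only [valAux, expVal, mul_zero, Finset.sum_const_zero, add_zero]
    show rAct g 2 s (piTilde 2 s) = mu0 s a1
    rw [show piTilde 2 s = a1 from rfl, rAct, Fin.sum_univ_two, hg2 s]
    simp [PMF.pure_apply, a1, a2]
  have hinnerP : ∀ s : Fin 2, valAux (rAct g) (PAct g) piPlus 1 2 s = mu0 s a1 := by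
    intro s
    simp only [valAux, expVal, mul_zero, Finset.sum_const_zero, add_zero]
    show rAct g 2 s (piPlus 2 s) = mu0 s a1
    rw [show piPlus 2 s = a1 from rfl, rAct, Fin.sum_univ_two, hg2 s]
    simp [PMF.pure_apply, a1, a2]
  -- transition probabilities at step 1 under a2 from s1
  have hP1 : ((PAct g 1 s1 a2) 0).toReal = p := by
    rw [PAct, bind_apply_two]
    have e0 : (P0 s1 (0 : Fin 2)) 0 = 1 := by
      rw [P0]; norm_num [a1, s1, PMF.pure_apply]
    have e1 : (P0 s1 (1 : Fin 2)) 0 = 0 := by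
      rw [P0]; norm_num [a1, s1, PMF.pure_apply]
    rw [e0, e1, mul_one, mul_zero, add_zero]
  have hP2 : ((PAct g 1 s1 a2) 1).toReal = q := by
    rw [PAct, bind_apply_two]
    have e0 : (P0 s1 (0 : Fin 2)) 1 = 0 := by
      rw [P0]; norm_num [a1, s1, PMF.pure_apply]
    have e1 : (P0 s1 (1 : Fin 2)) 1 = 1 := by
      rw [P0]; norm_num [a1, s1, PMF.pure_apply]
    rw [e0, e1, mul_one, mul_zero, zero_add]
  -- reward at step 1 under a2 from s1
  have hr1 : rAct g 1 s1 a2 = p * (1/4) + q * 1 := by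
    rw [rAct, Fin.sum_univ_two]
    norm_num [mu0, s1, a1, a2, hp, hq]
  -- value of piTilde
  have hVt : V 2 (rAct g) (PAct g) piTilde 1 s1 = p * (1/4) + q * 1 + (p * (1/4) + q * (3/5)) := by
    show valAux (rAct g) (PAct g) piTilde (1+1) 1 s1 = _
    rw [valAux]
    have hpi : piTilde 1 s1 = a2 := by decide
    rw [hpi, hr1, expVal, Fin.sum_univ_two, hinner 0, hinner 1, hP1, hP2]
    norm_num [mu0, s1, a1, a2]
  -- value of piPlus
  have hPp : PAct g 1 s1 a1 = PMF.pure s1 := by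
    rw [PAct, hg1, PMF.pure_bind, P0]
    norm_num [a1]
  have hVp : V 2 (rAct g) (PAct g) piPlus 1 s1 = 1 / 2 := by
    show valAux (rAct g) (PAct g) piPlus (1+1) 1 s1 = _
    rw [valAux]
    rw [show piPlus 1 s1 = a1 from rfl]
    have hrp : rAct g 1 s1 a1 = 1/4 := by
      rw [rAct, Fin.sum_univ_two, hg1]
      norm_num [mu0, s1, a1, a2, PMF.pure_apply]
    rw [hrp, hPp, expVal, Fin.sum_univ_two, hinnerP 0, hinnerP 1]
    norm_num [mu0, s1, a1, a2, PMF.pure_apply]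
  have hge : V 2 (rAct g) (PAct g) piTilde 1 s1 ≥ min (1/2 : ℝ) (8/5) := by
    rw [hVt, min_eq_left (by norm_num : (1/2:ℝ) ≤ 8/5)]
    nlinarith
  refine ⟨hge, by norm_num, hVp, by decide, ?_⟩
  rw [hVp]
  have := hge
  rw [min_eq_left (by norm_num : (1/2:ℝ) ≤ 8/5)] at this
  linarith

end RLAttack
end

section
/- Let (S, A, H, P, μ) be a finite episodic MDP with μ(s,a) ∈ (0,1] for all (s,a), and let π⁺ be any deterministic target policy. Define the combined reward-and-action-manipulated MDP M̄ with step-dependent rewards r̄_h(s,a) = μ(s,a) if a = π⁺_h(s) and r̄_h(s,a) = 0 otherwise, and step-dependent transitions P̄_h(s,a) = P(s, π⁺_h(s)) for every a. Then for every deterministic policy π, every step h ∈ {1,…,H}, and every state s: V̄^π_h(s) ≤ V̄^{π⁺}_h(s); moreover, if π_h(s) ≠ π⁺_h(s), then V̄^{π⁺}_h(s) − V̄^π_h(s) ≥ μ(s, π⁺_h(s)) > 0. In particular, the target policy π⁺ strictly dominates every policy at every disagreeing (h, s) in the manipulated MDP. -/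
open scoped BigOperators

namespace RLAttack

variable {S A : Type*} [Fintype S] [Fintype A]

/-- Combined-attack rewards: `r̄_h(s,a) = μ(s,a)` if `a = π⁺_h(s)`, else `0`. -/
noncomputable def rComb [DecidableEq A] (μ : S → A → ℝ) (πp : ℕ → S → A) :
    ℕ → S → A → ℝ :=
  fun h s a => if a = πp h s then μ s a else 0

/-- Combined-attack transitions: `P̄_h(s,a) = P(s, π⁺_h(s))` for every `a`. -/
noncomputable def PComb (P : S → A → PMF S) (πp : ℕ → S → A) :
    ℕ → S → A → PMF S :=
  fun h s _ => P s (πp h s)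

lemma expVal_mono (p : PMF S) {f g : S → ℝ} (hfg : ∀ s, f s ≤ g s) :
    expVal p f ≤ expVal p g := by
  apply Finset.sum_le_sum
  intro i _
  exact mul_le_mul_of_nonneg_left (hfg i) ENNReal.toReal_nonneg

lemma valAux_mono [DecidableEq A] (P : S → A → PMF S) (μ : S → A → ℝ)
    (hμ : ∀ s a, μ s a ∈ Set.Ioc (0 : ℝ) 1) (πp π : ℕ → S → A) :
    ∀ n h s, valAux (rComb μ πp) (PComb P πp) π n h s ≤
      valAux (rComb μ πp) (PComb P πp) πp n h s := by
  intro n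
  induction n with
  | zero => intro h s; simp [valAux]
  | succ n ih =>
    intro h s
    simp only [valAux, rComb, PComb]
    gcongr ?_ + ?_
    · split
      · simp_all
      · exact le_of_lt (by simp [(hμ s (πp h s)).1])
    · exact expVal_mono _ (fun s' => ih (h+1) s')

/-- In the combined reward-and-action manipulated MDP, the target policy
`π⁺` weakly dominates every policy at every `(h,s)`, and strictly dominates with gap at
least `μ(s, π⁺_h(s)) > 0` at every disagreeing `(h,s)`. -/
theorem statement4 {S A : Type*} [Fintype S] [Fintype A] [Nonempty S] [Nonempty A]
    [DecidableEq A]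
    (H : ℕ) (hH : 1 ≤ H) (P : S → A → PMF S) (μ : S → A → ℝ)
    (hμ : ∀ s a, μ s a ∈ Set.Ioc (0 : ℝ) 1) (πp : ℕ → S → A) :
    ∀ π : ℕ → S → A, ∀ h ∈ Finset.Icc 1 H, ∀ s : S,
      V H (rComb μ πp) (PComb P πp) π h s ≤ V H (rComb μ πp) (PComb P πp) πp h s ∧
      (π h s ≠ πp h s →
        V H (rComb μ πp) (PComb P πp) πp h s - V H (rComb μ πp) (PComb P πp) π h s
          ≥ μ s (πp h s) ∧ 0 < μ s (πp h s)) := by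
  intro π h hmem s
  simp only [Finset.mem_Icc] at hmem
  obtain ⟨n, hn⟩ : ∃ n, H + 1 - h = n + 1 :=
    ⟨H - h, by omega⟩
  have key : ∀ s : S,
      valAux (rComb μ πp) (PComb P πp) πp (n+1) h s
        - valAux (rComb μ πp) (PComb P πp) π (n+1) h s
      ≥ (if π h s = πp h s then 0 else μ s (πp h s)) := by
    intro s
    simp only [valAux, rComb, PComb, eq_self_iff_true, if_true]
    have hE := expVal_mono (S := S) (P s (πp h s))
      (fun s' => valAux_mono P μ hμ πp π n (h+1) s')
    by_cases heq : π h s = πp h s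
    · rw [if_pos heq, if_pos heq, heq]
      linarith
    · rw [if_neg heq, if_neg heq]
      linarith
  unfold V
  rw [hn]
  constructor
  · have := key s
    split at this <;> [linarith; linarith [(hμ s (πp h s)).1]]
  · intro hne
    have := key s
    rw [if_neg hne] at this
    exact ⟨this, (hμ s (πp h s)).1⟩

end RLAttack
end

section
/- Let (S, A, H, P, μ) be a finite episodic MDP with μ(s,a) ∈ (0,1] for all (s,a), and let π⁺ be a deterministic target policy. In the combined manipulated MDP M̄ (rewards r̄_h(s,a) = μ(s,a) if a = π⁺_h(s) else 0; transitions P̄_h(s,a) = P(s, π⁺_h(s)) for all a), for every deterministic policy π, every step h ∈ {1,…,H}, every state s, and every action a ≠ π⁺_h(s): Q̄^π_h(s,a) ≤ Q̄^{π⁺}_h(s, π⁺_h(s)) − μ(s, π⁺_h(s)). Consequently the suboptimality gap of any non-target action is at least min over h', s' of μ(s', π⁺_{h'}(s')). -/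
open scoped BigOperators

namespace RLAttack

variable {S A : Type*} [Fintype S] [Fintype A]

lemma valAux_le_target [DecidableEq A] (P : S → A → PMF S) (μ : S → A → ℝ)
    (hμ : ∀ s a, 0 < μ s a) (πp π : ℕ → S → A) :
    ∀ n h s, valAux (rComb μ πp) (PComb P πp) π n h s
      ≤ valAux (rComb μ πp) (PComb P πp) πp n h s := by
  intro n
  induction n with
  | zero => intro h s; simp [valAux]
  | succ n ih =>
    intro h s
    simp only [valAux]
    refine add_le_add ?_ (expVal_mono _ (fun s' => ih (h+1) s'))
    simp only [rComb]
    split_ifs with he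
    · rw [he]
    · exact le_of_lt (hμ s (πp h s))

/-- In the combined manipulated MDP, for every policy `π`, step
`h ∈ {1,…,H}`, state `s` and action `a ≠ π⁺_h(s)`:
`Q̄^π_h(s,a) ≤ Q̄^{π⁺}_h(s, π⁺_h(s)) − μ(s, π⁺_h(s))`; consequently the suboptimality
gap of any non-target action is at least `min_{h',s'} μ(s', π⁺_{h'}(s'))`. -/
theorem statement5 {S A : Type*} [Fintype S] [Fintype A] [Nonempty S] [Nonempty A]
    [DecidableEq A]
    (H : ℕ) (hH : 1 ≤ H) (P : S → A → PMF S) (μ : S → A → ℝ)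
    (hμ : ∀ s a, μ s a ∈ Set.Ioc (0 : ℝ) 1) (πp : ℕ → S → A) :
    ∀ π : ℕ → S → A, ∀ h ∈ Finset.Icc 1 H, ∀ s : S, ∀ a : A, a ≠ πp h s →
      Q H (rComb μ πp) (PComb P πp) π h s a
        ≤ Q H (rComb μ πp) (PComb P πp) πp h s (πp h s) - μ s (πp h s) ∧
      Q H (rComb μ πp) (PComb P πp) πp h s (πp h s)
          - Q H (rComb μ πp) (PComb P πp) π h s a
        ≥ (Finset.Icc 1 H ×ˢ (Finset.univ : Finset S)).inf'
            (Finset.Nonempty.product (Finset.nonempty_Icc.mpr hH) Finset.univ_nonempty)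
            (fun p => μ p.2 (πp p.1 p.2)) := by

  intro π h hh s a ha
  have hμpos : ∀ s a, 0 < μ s a := fun s a => (hμ s a).1
  have key : ∀ s', V H (rComb μ πp) (PComb P πp) π (h+1) s'
      ≤ V H (rComb μ πp) (PComb P πp) πp (h+1) s' :=
    fun s' => valAux_le_target P μ hμpos πp π _ _ s'
  have hexp : expVal (PComb P πp h s a) (fun s' => V H (rComb μ πp) (PComb P πp) π (h+1) s')
      ≤ expVal (PComb P πp h s (πp h s)) (fun s' => V H (rComb μ πp) (PComb P πp) πp (h+1) s') := by
    simp only [PComb]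
    exact expVal_mono _ key
  have hr1 : rComb μ πp h s a = 0 := by simp [rComb, ha]
  have hr2 : rComb μ πp h s (πp h s) = μ s (πp h s) := by simp [rComb]
  have hmem : (h, s) ∈ Finset.Icc 1 H ×ˢ (Finset.univ : Finset S) :=
    Finset.mem_product.mpr ⟨hh, Finset.mem_univ s⟩
  have hinf := Finset.inf'_le (fun p : ℕ × S => μ p.2 (πp p.1 p.2)) hmem
  constructor
  · simp only [Q, hr1, hr2]; linarith
  · simp only [Q, hr1, hr2, ge_iff_le]
    calc (Finset.Icc 1 H ×ˢ (Finset.univ : Finset S)).inf'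
          (Finset.Nonempty.product (Finset.nonempty_Icc.mpr hH) Finset.univ_nonempty)
          (fun p => μ p.2 (πp p.1 p.2)) ≤ μ s (πp h s) := hinf
      _ ≤ _ := by linarith

end RLAttack
end
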